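/- arXiv:1810.00969 — 2 statements merged into one kernel-verified Lean document; each statement's English description precedes it below -/
import Mathlib

section
/- Let $0 < \alpha \le \beta \le \gamma$. Then a $\mathrm{Beta}(\beta, \gamma - \beta)$ random variable stochastically dominates a $\mathrm{Beta}(\alpha, \gamma - \alpha)$ random variable; that is, for all $x \in [0,1]$, $\Pr\{\mathrm{Beta}(\beta, \gamma-\beta) \le x\} \le \Pr\{\mathrm{Beta}(\alpha, \gamma-\alpha) \le x\}$. -/
open MeasureTheory

/-- The Beta(a,b) distribution on ℝ, defined via its density
`x^(a-1) (1-x)^(b-1) / B(a,b)` on `(0,1)`. -/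
noncomputable def betaMeasure (a b : ℝ) : Measure ℝ :=
  (volume.restrict (Set.Ioo (0:ℝ) 1)).withDensity
    (fun x => ENNReal.ofReal (Real.Gamma (a + b) / (Real.Gamma a * Real.Gamma b) *
      x ^ (a - 1) * (1 - x) ^ (b - 1)))

/-!
The densities of `Beta(α, γ - α)` and `Beta(β, γ - β)` have the ratio
`t ↦ (beta α (γ - α) / beta β (γ - β)) * (t / (1 - t)) ^ (β - α)`, which increases on `(0, 1)`.
So the two densities cross exactly once: `Beta(β, γ - β)` has the smaller density to the left of
the crossing point and the larger one to the right. Since both are probability measures, this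
single crossing yields the comparison of their distribution functions on either side of it.
-/

open Set
open ProbabilityTheory (beta beta_pos betaPDF betaPDFReal isProbabilityMeasureBeta)

section SingleCrossing

variable {X : Type*} [LinearOrder X] [TopologicalSpace X] [OrderClosedTopology X]
  [MeasurableSpace X] [OpensMeasurableSpace X]

theorem measure_Iic_le_of_restrict_le {μ ν : Measure X} [IsFiniteMeasure μ] [IsFiniteMeasure ν]
    (huniv : ν univ ≤ μ univ) (t₀ : X) (hleft : ν.restrict (Iic t₀) ≤ μ.restrict (Iic t₀))
    (hright : μ.restrict (Ioi t₀) ≤ ν.restrict (Ioi t₀)) (x : X) :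
    ν (Iic x) ≤ μ (Iic x) := by
  rcases le_or_gt x t₀ with hx | hx
  · have hsub : Iic x ∩ Iic t₀ = Iic x := inter_eq_left.2 (Iic_subset_Iic.2 hx)
    simpa only [Measure.restrict_apply measurableSet_Iic, hsub] using hleft (Iic x)
  · have hsub : Ioi x ∩ Ioi t₀ = Ioi x := inter_eq_left.2 (Ioi_subset_Ioi hx.le)
    have hIoi : μ (Ioi x) ≤ ν (Ioi x) := by
      simpa only [Measure.restrict_apply measurableSet_Ioi, hsub] using hright (Ioi x)
    rw [← compl_Ioi, measure_compl measurableSet_Ioi (measure_ne_top _ _),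
      measure_compl measurableSet_Ioi (measure_ne_top _ _)]
    exact tsub_le_tsub huniv hIoi

end SingleCrossing

theorem restrict_withDensity_mono {X : Type*} [MeasurableSpace X] {μ : Measure X}
    {f g : X → ENNReal} {s : Set X} (hs : MeasurableSet s) (hfg : ∀ x ∈ s, f x ≤ g x) :
    (μ.withDensity f).restrict s ≤ (μ.withDensity g).restrict s := by
  rw [restrict_withDensity hs, restrict_withDensity hs]
  exact withDensity_mono (ae_restrict_of_forall_mem hs hfg)

theorem exists_forall_mul_rpow_le_iff {c₁ c₂ δ : ℝ} (hc₁ : 0 < c₁) (hc₂ : 0 ≤ c₂) (hδ : 0 < δ) :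
    ∃ t₀, ∀ t ∈ Icc (0 : ℝ) 1, c₂ * t ^ δ ≤ c₁ * (1 - t) ^ δ ↔ t ≤ t₀ := by
  set p := c₁ ^ δ⁻¹
  set q := c₂ ^ δ⁻¹
  have hp : 0 < p := Real.rpow_pos_of_pos hc₁ _
  have hq : 0 ≤ q := Real.rpow_nonneg hc₂ _
  refine ⟨p / (p + q), fun t ⟨ht₀, ht₁⟩ => ?_⟩
  calc c₂ * t ^ δ ≤ c₁ * (1 - t) ^ δ
      ↔ (q * t) ^ δ ≤ (p * (1 - t)) ^ δ := by
        rw [Real.mul_rpow hq ht₀, Real.mul_rpow hp.le (sub_nonneg.2 ht₁),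
          Real.rpow_inv_rpow hc₂ hδ.ne', Real.rpow_inv_rpow hc₁.le hδ.ne']
    _ ↔ q * t ≤ p * (1 - t) := Real.rpow_le_rpow_iff (by positivity)
        (mul_nonneg hp.le (sub_nonneg.2 ht₁)) hδ
    _ ↔ t ≤ p / (p + q) := by
        rw [le_div_iff₀ (by positivity)]
        constructor <;> intro h <;> linarith

theorem betaPDFReal_of_mem_Ioo {a b t : ℝ} (ht : t ∈ Ioo (0 : ℝ) 1) :
    betaPDFReal a b t = 1 / beta a b * t ^ (a - 1) * (1 - t) ^ (b - 1) :=
  if_pos ht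

theorem betaPDFReal_of_notMem_Ioo {a b t : ℝ} (ht : t ∉ Ioo (0 : ℝ) 1) : betaPDFReal a b t = 0 :=
  if_neg ht

theorem exists_betaPDFReal_le_iff {α β γ : ℝ} (hα : 0 < α) (hαβ : α < β) (hβγ : β < γ) :
    ∃ t₀, ∀ t ∈ Ioo (0 : ℝ) 1, betaPDFReal β (γ - β) t ≤ betaPDFReal α (γ - α) t ↔ t ≤ t₀ := by
  set δ := β - α
  set c₁ := 1 / beta α (γ - α)
  set c₂ := 1 / beta β (γ - β)
  have hc₁ : 0 < c₁ := one_div_pos.2 (beta_pos hα (by linarith))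
  have hc₂ : 0 ≤ c₂ := (one_div_pos.2 (beta_pos (by linarith) (by linarith))).le
  obtain ⟨t₀, ht₀⟩ := exists_forall_mul_rpow_le_iff hc₁ hc₂ (sub_pos.2 hαβ)
  refine ⟨t₀, fun t ht => ?_⟩
  have hcommon : 0 < t ^ (α - 1) * (1 - t) ^ (γ - β - 1) :=
    mul_pos (Real.rpow_pos_of_pos ht.1 _) (Real.rpow_pos_of_pos (sub_pos.2 ht.2) _)
  have hdensβ : betaPDFReal β (γ - β) t = c₂ * t ^ δ * (t ^ (α - 1) * (1 - t) ^ (γ - β - 1)) := by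
    rw [betaPDFReal_of_mem_Ioo ht, show β - 1 = δ + (α - 1) by ring, Real.rpow_add ht.1]
    ring
  have hdensα : betaPDFReal α (γ - α) t = c₁ * (1 - t) ^ δ * (t ^ (α - 1) * (1 - t) ^ (γ - β - 1)) := by
    rw [betaPDFReal_of_mem_Ioo ht, show γ - α - 1 = δ + (γ - β - 1) by ring,
      Real.rpow_add (sub_pos.2 ht.2)]
    ring
  rw [hdensβ, hdensα, mul_le_mul_iff_of_pos_right hcommon]
  exact ht₀ t (Ioo_subset_Icc_self ht)

theorem betaMeasure_restrict_le {a b a' b' : ℝ} {s : Set ℝ} (hs : MeasurableSet s)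
    (h : ∀ t ∈ s ∩ Ioo (0 : ℝ) 1, betaPDFReal a b t ≤ betaPDFReal a' b' t) :
    (ProbabilityTheory.betaMeasure a b).restrict s ≤
      (ProbabilityTheory.betaMeasure a' b').restrict s := by
  refine restrict_withDensity_mono hs fun t hts => ?_
  by_cases ht : t ∈ Ioo (0 : ℝ) 1
  · exact ENNReal.ofReal_le_ofReal (h t ⟨hts, ht⟩)
  · simp only [betaPDF, betaPDFReal_of_notMem_Ioo ht, le_refl]

theorem betaMeasure_Iic_le_of_lt {α β γ : ℝ} (hα : 0 < α) (hαβ : α < β) (hβγ : β < γ) (x : ℝ) :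
    ProbabilityTheory.betaMeasure β (γ - β) (Iic x) ≤
      ProbabilityTheory.betaMeasure α (γ - α) (Iic x) := by
  have := isProbabilityMeasureBeta hα (by linarith : 0 < γ - α)
  have := isProbabilityMeasureBeta (hα.trans hαβ) (sub_pos.2 hβγ)
  obtain ⟨t₀, ht₀⟩ := exists_betaPDFReal_le_iff hα hαβ hβγ
  refine measure_Iic_le_of_restrict_le (by simp) t₀ ?_ ?_ x
  · exact betaMeasure_restrict_le measurableSet_Iic fun t ht => (ht₀ t ht.2).2 ht.1
  · exact betaMeasure_restrict_le measurableSet_Ioi fun t ht =>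
      le_of_not_ge fun hle => (not_le.2 ht.1) ((ht₀ t ht.2).1 hle)

theorem betaMeasure_eq_probabilityTheory_betaMeasure (a b : ℝ) :
    betaMeasure a b = ProbabilityTheory.betaMeasure a b := by
  rw [ProbabilityTheory.betaMeasure, betaMeasure, ← withDensity_indicator measurableSet_Ioo]
  congr 1
  ext t
  by_cases ht : t ∈ Ioo (0 : ℝ) 1
  · rw [indicator_of_mem ht, betaPDF, betaPDFReal_of_mem_Ioo ht, beta, one_div_div]
  · rw [indicator_of_notMem ht, betaPDF, betaPDFReal_of_notMem_Ioo ht, ENNReal.ofReal_zero]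

/-- For `0 < α ≤ β ≤ γ`, `Beta(β, γ-β)` stochastically dominates `Beta(α, γ-α)`:
for all `x ∈ [0,1]`, `Pr{Beta(β,γ-β) ≤ x} ≤ Pr{Beta(α,γ-α) ≤ x}`. -/
theorem beta_stochastic_dominance (α β γ : ℝ) (hα : 0 < α) (hαβ : α ≤ β) (hβγ : β ≤ γ) :
    ∀ x ∈ Set.Icc (0:ℝ) 1,
      betaMeasure β (γ - β) (Set.Iic x) ≤ betaMeasure α (γ - α) (Set.Iic x) := by
  intro x _
  rcases hβγ.eq_or_lt with rfl | hβγ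
  · simp [betaMeasure, Real.Gamma_zero]
  rcases hαβ.eq_or_lt with rfl | hαβ
  · rfl
  rw [betaMeasure_eq_probabilityTheory_betaMeasure, betaMeasure_eq_probabilityTheory_betaMeasure]
  exact betaMeasure_Iic_le_of_lt hα hαβ hβγ x
end

section
/- Let $k \ge 1$ be a real number, $0 < t < 1$, and let $f_{k/2,k/2}$ be the density of a $\mathrm{Beta}(k/2,k/2)$ random variable. Then $\int_t^1 f_{k/2,k/2}(x)\,dx \le 2(1-t)^{k/2}\, 3^k / k$, and consequently $\Pr\{\mathrm{Beta}(k/2,k/2) \ge t\} \le (2/k)(1-t)^{k/2}\,3^k$. -/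
/-!
Write `a = k/2` and `s = 1 - t`. The substitution `x ↦ 1 - x` turns the tail into the regularized
incomplete beta function `I_s(a, a) = ∫_0^s (x(1-x))^(a-1) / B(a, a)`, where
`B(a, a) = Γ(a)² / Γ(2a) = ∫_0^1 (x(1-x))^(a-1)`. For `a ≥ 1` the numerator is at most
`∫_0^s x^(a-1) = s^a / a`, and the integrand is at least `9^(1-a)` on `[1/3, 2/3]`, so
`B(a, a) ≥ 9^(-a) = 3^(-k)`. For `1/2 ≤ a ≤ 1` instead `B(a, a) ≥ 1`; if `s ≤ 1/2` the factor
`(1-x)^(a-1)` is at most `2 ≤ 9^a`, and if `s > 1/2` the claimed bound `(9s)^a / a` exceeds `1`.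
-/

open MeasureTheory

/-- The density of a `Beta(k/2, k/2)` random variable. -/
noncomputable def betaHalfDensity (k : ℝ) (x : ℝ) : ℝ :=
  Real.Gamma k / (Real.Gamma (k / 2) * Real.Gamma (k / 2)) *
    (x * (1 - x)) ^ (k / 2 - 1)

open Set intervalIntegral

section

variable {a s k : ℝ}

theorem Complex.ofReal_mul_one_sub_rpow {x : ℝ} (hx0 : 0 ≤ x) (hx1 : x ≤ 1) :
    (((x * (1 - x)) ^ (a - 1) : ℝ) : ℂ) =
      (x : ℂ) ^ ((a : ℂ) - 1) * (1 - (x : ℂ)) ^ ((a : ℂ) - 1) := by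
  rw [Real.mul_rpow hx0 (by linarith)]
  push_cast [Complex.ofReal_cpow hx0, Complex.ofReal_cpow (sub_nonneg.2 hx1)]
  rfl

theorem intervalIntegrable_mul_one_sub_rpow (ha : 0 < a) :
    IntervalIntegrable (fun x : ℝ => (x * (1 - x)) ^ (a - 1)) volume 0 1 := by
  refine (Complex.betaIntegral_convergent (u := a) (v := a) (by simpa) (by simpa)).norm.congr ?_
  intro x hx
  rw [uIoc_of_le zero_le_one] at hx
  dsimp only
  rw [← Complex.ofReal_mul_one_sub_rpow hx.1.le hx.2, Complex.norm_real, Real.norm_of_nonneg]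
  exact Real.rpow_nonneg (mul_nonneg hx.1.le (sub_nonneg.2 hx.2)) _

theorem ProbabilityTheory.beta_self_eq_integral (ha : 0 < a) :
    ProbabilityTheory.beta a a = ∫ x in (0 : ℝ)..1, (x * (1 - x)) ^ (a - 1) := by
  have h : EqOn (fun x : ℝ => (((x * (1 - x)) ^ (a - 1) : ℝ) : ℂ))
      (fun x : ℝ => (x : ℂ) ^ ((a : ℂ) - 1) * (1 - (x : ℂ)) ^ ((a : ℂ) - 1)) (uIcc 0 1) := by
    intro x hx
    rw [uIcc_of_le zero_le_one] at hx
    exact Complex.ofReal_mul_one_sub_rpow hx.1 hx.2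
  rw [ProbabilityTheory.beta_eq_betaIntegralReal a a ha ha, Complex.betaIntegral,
    ← integral_congr h, intervalIntegral.integral_ofReal, Complex.ofReal_re]

theorem integral_mul_one_sub_rpow_symm (c t : ℝ) :
    ∫ x in t..1, (x * (1 - x)) ^ c = ∫ x in (0 : ℝ)..1 - t, (x * (1 - x)) ^ c := by
  simpa [mul_comm] using
    integral_comp_sub_left (fun x : ℝ => (x * (1 - x)) ^ c) (a := t) (b := 1) 1

theorem intervalIntegrable_mul_one_sub_rpow_of_mem (ha : 0 < a) {u v : ℝ} (hu : u ∈ Icc 0 1)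
    (hv : v ∈ Icc 0 1) :
    IntervalIntegrable (fun x : ℝ => (x * (1 - x)) ^ (a - 1)) volume u v :=
  (intervalIntegrable_mul_one_sub_rpow ha).mono_set <| by
    rw [← uIcc_of_le zero_le_one] at hu hv
    exact uIcc_subset_uIcc hu hv

theorem integral_le_of_le_mul_rpow {f : ℝ → ℝ} {M : ℝ} (ha : 0 < a) (hs : 0 ≤ s)
    (hf : IntervalIntegrable f volume 0 s) (hfM : ∀ x ∈ Ioo 0 s, f x ≤ M * x ^ (a - 1)) :
    ∫ x in (0 : ℝ)..s, f x ≤ M * (s ^ a / a) := by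
  have hg : IntervalIntegrable (fun x : ℝ => M * x ^ (a - 1)) volume 0 s :=
    (intervalIntegral.intervalIntegrable_rpow' (by linarith)).const_mul M
  calc _ ≤ ∫ x in (0 : ℝ)..s, M * x ^ (a - 1) := integral_mono_on_of_le_Ioo hs hf hg hfM
    _ = M * (s ^ a / a) := by
      rw [intervalIntegral.integral_const_mul, integral_rpow (Or.inl (by linarith)),
        sub_add_cancel, Real.zero_rpow ha.ne', sub_zero]

theorem integral_mul_one_sub_rpow_le_of_one_le (ha : 1 ≤ a) (hs0 : 0 ≤ s) (hs1 : s ≤ 1) :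
    ∫ x in (0 : ℝ)..s, (x * (1 - x)) ^ (a - 1) ≤ s ^ a / a := by
  refine (one_mul (s ^ a / a)) ▸ integral_le_of_le_mul_rpow (by linarith) hs0
    (intervalIntegrable_mul_one_sub_rpow_of_mem (by linarith) ⟨le_rfl, zero_le_one⟩ ⟨hs0, hs1⟩)
    fun x hx => ?_
  rw [one_mul]
  exact Real.rpow_le_rpow (mul_nonneg hx.1.le (by linarith [hx.2]))
    (mul_le_of_le_one_right hx.1.le (by linarith [hx.1])) (by linarith)

theorem integral_mul_one_sub_rpow_le_of_le_half (ha : 0 < a) (hs0 : 0 ≤ s) (hs : s ≤ 1 / 2) :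
    ∫ x in (0 : ℝ)..s, (x * (1 - x)) ^ (a - 1) ≤ 2 * (s ^ a / a) := by
  refine integral_le_of_le_mul_rpow ha hs0
    (intervalIntegrable_mul_one_sub_rpow_of_mem ha ⟨le_rfl, zero_le_one⟩ ⟨hs0, by linarith⟩)
    fun x hx => ?_
  have h1x : 1 / 2 ≤ 1 - x := by linarith [hx.2]
  have hpow : (1 - x) ^ (a - 1) ≤ 2 :=
    calc (1 - x) ^ (a - 1) ≤ (1 - x) ^ (-1 : ℝ) :=
          Real.rpow_le_rpow_of_exponent_ge (by linarith) (by linarith [hx.1]) (by linarith)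
      _ ≤ 2 := by
          rw [Real.rpow_neg_one]
          exact inv_le_of_inv_le₀ (by norm_num) (by linarith)
  rw [Real.mul_rpow hx.1.le (by linarith), mul_comm 2]
  exact mul_le_mul_of_nonneg_left hpow (Real.rpow_nonneg hx.1.le _)

theorem one_le_integral_mul_one_sub_rpow (ha0 : 0 < a) (ha1 : a ≤ 1) :
    1 ≤ ∫ x in (0 : ℝ)..1, (x * (1 - x)) ^ (a - 1) := by
  simpa using integral_mono_on_of_le_Ioo zero_le_one intervalIntegrable_const
    (intervalIntegrable_mul_one_sub_rpow ha0) fun x hx =>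
      Real.one_le_rpow_of_pos_of_le_one_of_nonpos (mul_pos hx.1 (by linarith [hx.2]))
        (by nlinarith [hx.1, hx.2]) (by linarith)

theorem nine_rpow_neg_le_integral_mul_one_sub_rpow (ha : 1 ≤ a) :
    (9 : ℝ) ^ (-a) ≤ ∫ x in (0 : ℝ)..1, (x * (1 - x)) ^ (a - 1) := by
  have hint := intervalIntegrable_mul_one_sub_rpow_of_mem (a := a) (by linarith)
    (u := 1 / 3) (v := 2 / 3) ⟨by norm_num, by norm_num⟩ ⟨by norm_num, by norm_num⟩
  have hnonneg : 0 ≤ᵐ[volume.restrict (Ioc 0 1)] fun x : ℝ => (x * (1 - x)) ^ (a - 1) :=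
    (ae_restrict_iff' measurableSet_Ioc).2 <| Filter.Eventually.of_forall fun x hx =>
      Real.rpow_nonneg (mul_nonneg hx.1.le (by linarith [hx.2])) _
  calc (9 : ℝ) ^ (-a) ≤ (2 / 3 - 1 / 3) * (9 : ℝ)⁻¹ ^ (a - 1) := by
        rw [Real.inv_rpow (by norm_num), ← Real.rpow_neg (by norm_num), neg_sub,
          Real.rpow_sub (by norm_num), Real.rpow_one, Real.rpow_neg (by norm_num)]
        have : 0 < (9 : ℝ) ^ a := by positivity
        field_simp
        norm_num
    _ = ∫ x in (1 / 3 : ℝ)..(2 / 3), (9 : ℝ)⁻¹ ^ (a - 1) := by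
        rw [intervalIntegral.integral_const, smul_eq_mul]
    _ ≤ ∫ x in (1 / 3 : ℝ)..(2 / 3), (x * (1 - x)) ^ (a - 1) :=
        integral_mono_on (by norm_num) intervalIntegrable_const hint fun x hx =>
          Real.rpow_le_rpow (by norm_num) (by nlinarith [hx.1, hx.2]) (by linarith)
    _ ≤ ∫ x in (0 : ℝ)..1, (x * (1 - x)) ^ (a - 1) :=
        integral_mono_interval (by norm_num) (by norm_num) (by norm_num) hnonneg
          (intervalIntegrable_mul_one_sub_rpow (by linarith))

-- `I_s(a, a)`
noncomputable def regIncBeta (a s : ℝ) : ℝ :=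
  (∫ x in (0 : ℝ)..s, (x * (1 - x)) ^ (a - 1)) / ∫ x in (0 : ℝ)..1, (x * (1 - x)) ^ (a - 1)

theorem regIncBeta_le_of_one_le (ha : 1 ≤ a) (hs0 : 0 ≤ s) (hs1 : s ≤ 1) :
    regIncBeta a s ≤ 9 ^ a * s ^ a / a := by
  have hB := nine_rpow_neg_le_integral_mul_one_sub_rpow ha
  have h9 : 0 < (9 : ℝ) ^ (-a) := by positivity
  rw [regIncBeta, div_le_iff₀ (h9.trans_le hB)]
  calc _ ≤ s ^ a / a := integral_mul_one_sub_rpow_le_of_one_le ha hs0 hs1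
    _ = 9 ^ a * s ^ a / a * (9 : ℝ) ^ (-a) := by
        rw [Real.rpow_neg (by norm_num)]
        field_simp
    _ ≤ _ := mul_le_mul_of_nonneg_left hB (by positivity)

theorem regIncBeta_le_of_le_one (ha0 : 1 / 2 ≤ a) (ha1 : a ≤ 1) (hs0 : 0 ≤ s) (hs1 : s ≤ 1) :
    regIncBeta a s ≤ 9 ^ a * s ^ a / a := by
  have ha : 0 < a := by linarith
  have hB := one_le_integral_mul_one_sub_rpow ha ha1
  rw [regIncBeta, div_le_iff₀ (by linarith)]
  rcases le_or_gt s (1 / 2) with hs | hs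
  · have h9 : (2 : ℝ) ≤ 9 ^ a :=
      calc (2 : ℝ) ≤ 9 ^ (1 / 2 : ℝ) := by
            rw [show (9 : ℝ) = 3 ^ (2 : ℝ) by norm_num, ← Real.rpow_mul (by norm_num)]
            norm_num
        _ ≤ 9 ^ a := Real.rpow_le_rpow_of_exponent_le (by norm_num) ha0
    calc _ ≤ 2 * (s ^ a / a) := integral_mul_one_sub_rpow_le_of_le_half ha hs0 hs
      _ ≤ 9 ^ a * s ^ a / a := by
          rw [mul_div_assoc]
          exact mul_le_mul_of_nonneg_right h9 (by positivity)
      _ ≤ _ := le_mul_of_one_le_right (by positivity) hB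
  · have h9s : a ≤ (9 * s) ^ a :=
      ha1.trans (Real.one_le_rpow (by linarith) ha.le)
    calc _ ≤ ∫ x in (0 : ℝ)..1, (x * (1 - x)) ^ (a - 1) :=
          integral_mono_interval le_rfl hs0 hs1
            ((ae_restrict_iff' measurableSet_Ioc).2 <| Filter.Eventually.of_forall fun x hx =>
              Real.rpow_nonneg (mul_nonneg hx.1.le (by linarith [hx.2])) _)
            (intervalIntegrable_mul_one_sub_rpow ha)
      _ ≤ _ := by
          refine le_mul_of_one_le_left (by linarith) ?_
          rw [← Real.mul_rpow (by norm_num) hs0, le_div_iff₀ ha, one_mul]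
          exact h9s

theorem regIncBeta_le (ha : 1 / 2 ≤ a) (hs0 : 0 ≤ s) (hs1 : s ≤ 1) :
    regIncBeta a s ≤ 9 ^ a * s ^ a / a := by
  rcases le_total a 1 with ha1 | ha1
  · exact regIncBeta_le_of_le_one ha ha1 hs0 hs1
  · exact regIncBeta_le_of_one_le ha1 hs0 hs1

theorem betaHalfDensity_eq (k : ℝ) :
    betaHalfDensity k = fun x => (ProbabilityTheory.beta (k / 2) (k / 2))⁻¹ *
      (x * (1 - x)) ^ (k / 2 - 1) := by
  ext x
  rw [betaHalfDensity, ProbabilityTheory.beta, add_halves, inv_div]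

theorem integral_betaHalfDensity (hk : 0 < k) (t : ℝ) :
    ∫ x in t..1, betaHalfDensity k x = regIncBeta (k / 2) (1 - t) := by
  rw [betaHalfDensity_eq, intervalIntegral.integral_const_mul,
    integral_mul_one_sub_rpow_symm, ProbabilityTheory.beta_self_eq_integral (by linarith),
    regIncBeta, inv_mul_eq_div]

theorem betaMeasure_half_half_Ici (hk : 0 < k) {t : ℝ} (ht0 : 0 < t) (ht1 : t ≤ 1) :
    betaMeasure (k / 2) (k / 2) (Ici t) = ENNReal.ofReal (∫ x in t..1, betaHalfDensity k x) := by
  have hset : Ici t ∩ Ioo 0 1 = Ico t 1 := by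
    ext x
    simp only [mem_inter_iff, mem_Ici, mem_Ioo, mem_Ico]
    exact ⟨fun h => ⟨h.1, h.2.2⟩, fun h => ⟨h.1, ht0.trans_le h.1, h.2⟩⟩
  have hdens : ∀ x ∈ Ioc t 1,
      Real.Gamma (k / 2 + k / 2) / (Real.Gamma (k / 2) * Real.Gamma (k / 2)) *
        x ^ (k / 2 - 1) * (1 - x) ^ (k / 2 - 1) = betaHalfDensity k x := fun x hx => by
    rw [betaHalfDensity, add_halves, mul_assoc,
      Real.mul_rpow (ht0.trans hx.1).le (by linarith [hx.2])]
  have hint : IntegrableOn (betaHalfDensity k) (Ioc t 1) := by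
    rw [betaHalfDensity_eq]
    exact ((intervalIntegrable_mul_one_sub_rpow_of_mem (by linarith) ⟨ht0.le, ht1⟩
      ⟨zero_le_one, le_rfl⟩).const_mul _).1
  have hnonneg : 0 ≤ᵐ[volume.restrict (Ioc t 1)] betaHalfDensity k := by
    refine (ae_restrict_iff' measurableSet_Ioc).2 <| Filter.Eventually.of_forall fun x hx => ?_
    rw [betaHalfDensity_eq]
    exact mul_nonneg (inv_nonneg.2 (ProbabilityTheory.beta_pos (by linarith) (by linarith)).le)
      (Real.rpow_nonneg (mul_nonneg (ht0.trans hx.1).le (by linarith [hx.2])) _)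
  rw [betaMeasure, withDensity_apply _ measurableSet_Ici,
    Measure.restrict_restrict measurableSet_Ici, hset, setLIntegral_congr Ico_ae_eq_Ioc,
    setLIntegral_congr_fun measurableSet_Ioc fun x hx => by rw [hdens x hx],
    ← ofReal_integral_eq_lintegral_ofReal hint hnonneg,
    intervalIntegral.integral_of_le ht1]

end

/-- For real `k ≥ 1` and `0 < t < 1`, the upper tail of a `Beta(k/2,k/2)` random
variable satisfies `∫_t^1 f_{k/2,k/2}(x) dx ≤ 2(1-t)^(k/2) 3^k / k`, and
consequently `Pr{Beta(k/2,k/2) ≥ t} ≤ (2/k)(1-t)^(k/2) 3^k`. -/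
theorem beta_half_tail_bound (k t : ℝ) (hk : 1 ≤ k) (ht0 : 0 < t) (ht1 : t < 1) :
    (∫ x in t..1, betaHalfDensity k x) ≤ 2 * (1 - t) ^ (k / 2) * 3 ^ k / k ∧
    betaMeasure (k / 2) (k / 2) (Set.Ici t) ≤
      ENNReal.ofReal (2 / k * (1 - t) ^ (k / 2) * 3 ^ k) := by
  have hk0 : 0 < k := by linarith
  have hnine : (9 : ℝ) ^ (k / 2) = 3 ^ k := by
    rw [show (9 : ℝ) = 3 ^ (2 : ℝ) by norm_num, ← Real.rpow_mul (by norm_num),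
      mul_div_cancel₀ _ two_ne_zero]
  have htail : ∫ x in t..1, betaHalfDensity k x ≤ 2 * (1 - t) ^ (k / 2) * 3 ^ k / k := by
    rw [integral_betaHalfDensity hk0]
    refine (regIncBeta_le (by linarith) (by linarith) (by linarith)).trans_eq ?_
    rw [hnine]
    field_simp
  refine ⟨htail, ?_⟩
  rw [betaMeasure_half_half_Ici hk0 ht0 ht1.le]
  exact ENNReal.ofReal_le_ofReal (htail.trans_eq (by ring))
end
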